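/- For probability measures P and R, the Rényi divergence D_α(P,R) is nondecreasing in α on (0,1) and converges to the Kullback–Leibler divergence KL(P,R) as α increases to 1. -/

import Mathlib

open MeasureTheory Classical

/-- The `α`-Rényi divergence `(1/(α−1)) log ∫ (dP/dR)^{α−1} dP`, `+∞` if `R` does not
dominate `P`. -/
noncomputable def renyiDiv {X : Type*} [MeasurableSpace X] (a : ℝ) (P R : Measure X) : EReal :=
  if P ≪ R then
    (((a - 1)⁻¹ * Real.log (∫ x, ((P.rnDeriv R x).toReal) ^ (a - 1) ∂P) : ℝ) : EReal)
  else ⊤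

/-- Kullback–Leibler divergence, `+∞` if `R` does not dominate `P`. -/
noncomputable def klDiv' {X : Type*} [MeasurableSpace X] (P R : Measure X) : EReal :=
  if P ≪ R ∧ Integrable (llr P R) P then ((∫ x, llr P R x ∂P : ℝ) : EReal) else ⊤

/-!
With `ℓ = log (dP/dR)` and `Λ(t) = log E_P[exp (t ℓ)]` the cumulant generating function of `ℓ`
under `P`, `D_α(P, R) = Λ(α - 1) / (α - 1)`. Since `exp (-ℓ) = dR/dP`, `exp (t ℓ)` is `P`-integrable
for `t ∈ [-1, 0]`. Jensen's inequality for `x ↦ x ^ (s / t)` gives `Λ(s) / s ≤ Λ(t) / t` for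
`s ≤ t < 0`, hence monotonicity. As `t ↑ 0`, `Λ(t) / t` is squeezed between
`E_P[(exp (t ℓ) - 1) / t]` (by `log x ≤ x - 1`) and `E_P[ℓ]` (by Jensen for `exp`); the integrand
of the lower bound increases pointwise to `ℓ`, so by monotone convergence it tends to `E_P[ℓ]`,
or to `+∞` when `ℓ` is not integrable.
-/

open Real Filter Set Topology ProbabilityTheory

lemma exp_mul_sub_one_div_le_of_neg {t : ℝ} (ht : t < 0) (x : ℝ) :
    (exp (t * x) - 1) / t ≤ x := by
  rw [div_le_iff_of_neg ht]
  linarith [add_one_le_exp (t * x)]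

lemma exp_mul_sub_one_div_le_exp_mul_sub_one_div {s t : ℝ} (hst : s ≤ t) (ht : t < 0) (x : ℝ) :
    (exp (s * x) - 1) / s ≤ (exp (t * x) - 1) / t := by
  have h := (convexOn_rpow_left (exp_pos x)).secant_mono (mem_univ 0) (mem_univ s) (mem_univ t)
    (by linarith) ht.ne hst
  simpa only [← exp_mul, mul_comm x, zero_mul, exp_zero, sub_zero] using h

lemma tendsto_exp_mul_sub_one_div (x : ℝ) :
    Tendsto (fun t => (exp (t * x) - 1) / t) (𝓝[<] 0) (𝓝 x) := by
  have hderiv : HasDerivAt (fun t => exp (t * x)) x 0 := by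
    simpa using ((hasDerivAt_mul_const x).exp (x := 0))
  refine (hasDerivAt_iff_tendsto_slope.mp hderiv).mono_left
    (nhdsWithin_mono _ fun t ht => ne_of_lt ht) |>.congr fun t => ?_
  simp [slope_def_field]

lemma tendsto_integral_atTop_of_monotone_of_not_integrable {α : Type*} [MeasurableSpace α]
    {μ : Measure α} {f : ℕ → α → ℝ} {F : α → ℝ} (hf : ∀ n, Integrable (f n) μ)
    (hF_meas : AEStronglyMeasurable F μ) (hF : ¬Integrable F μ)
    (h_mono : ∀ᵐ x ∂μ, Monotone fun n => f n x)
    (h_tendsto : ∀ᵐ x ∂μ, Tendsto (fun n => f n x) atTop (𝓝 (F x))) :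
    Tendsto (fun n => ∫ x, f n x ∂μ) atTop atTop := by
  have h_int_mono : Monotone fun n => ∫ x, f n x ∂μ := fun m n hmn =>
    integral_mono_ae (hf m) (hf n) (h_mono.mono fun x hx => hx hmn)
  refine tendsto_atTop_atTop_of_monotone' h_int_mono fun ⟨C, hC⟩ => hF ?_
  have hF_ge : 0 ≤ᵐ[μ] F - f 0 := by
    filter_upwards [h_tendsto, h_mono] with x hx hmono
    exact sub_nonneg.2 (ge_of_tendsto' hx fun n => hmono (Nat.zero_le n))
  have h_lintegral :
      ∫⁻ x, ENNReal.ofReal (F x - f 0 x) ∂μ ≤ ENNReal.ofReal (C - ∫ x, f 0 x ∂μ) := by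
    refine le_of_tendsto' (lintegral_tendsto_of_tendsto_of_monotone
      (fun n => ((hf n).sub (hf 0)).aemeasurable.ennreal_ofReal) ?_ ?_) fun n => ?_
    · filter_upwards [h_mono] with x hx m n hmn
      exact ENNReal.ofReal_le_ofReal (sub_le_sub_right (hx hmn) _)
    · filter_upwards [h_tendsto] with x hx
      exact (ENNReal.continuous_ofReal.tendsto _).comp (hx.sub_const _)
    · rw [← ofReal_integral_eq_lintegral_ofReal ((hf n).sub (hf 0))
        (h_mono.mono fun x hx => sub_nonneg.2 (hx (Nat.zero_le n))), integral_sub' (hf n) (hf 0)]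
      exact ENNReal.ofReal_le_ofReal (sub_le_sub_right (hC ⟨n, rfl⟩) _)
  have h_diff : Integrable (F - f 0) μ :=
    ⟨hF_meas.sub (hf 0).1, (hasFiniteIntegral_iff_ofReal hF_ge).2
      (h_lintegral.trans_lt ENNReal.ofReal_lt_top)⟩
  simpa using h_diff.add (hf 0)

section Cgf

variable {Ω : Type*} [MeasurableSpace Ω] {μ : Measure Ω} [IsProbabilityMeasure μ] {X : Ω → ℝ}
  {s t : ℝ}

lemma mgf_sub_one_div_eq_integral (ht : Integrable (fun ω => exp (t * X ω)) μ) :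
    (mgf X μ t - 1) / t = ∫ ω, (exp (t * X ω) - 1) / t ∂μ := by
  rw [integral_div, integral_sub ht (integrable_const 1), integral_const, mgf]
  simp

lemma mgf_sub_one_div_le_mgf_sub_one_div (hs : Integrable (fun ω => exp (s * X ω)) μ)
    (hst : s ≤ t) (ht : t < 0) :
    (mgf X μ s - 1) / s ≤ (mgf X μ t - 1) / t := by
  have ht_int := integrable_exp_mul_of_nonpos_of_ge hs ht.le hst
  rw [mgf_sub_one_div_eq_integral hs, mgf_sub_one_div_eq_integral ht_int]
  exact integral_mono ((hs.sub (integrable_const 1)).div_const _)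
    ((ht_int.sub (integrable_const 1)).div_const _)
    fun ω => exp_mul_sub_one_div_le_exp_mul_sub_one_div hst ht (X ω)

lemma mgf_sub_one_div_le_cgf_div (ht : t < 0) (h_int : Integrable (fun ω => exp (t * X ω)) μ) :
    (mgf X μ t - 1) / t ≤ cgf X μ t / t :=
  div_le_div_of_nonpos_of_le ht.le (log_le_sub_one_of_pos (mgf_pos h_int))

lemma cgf_div_le_integral (ht : t < 0) (hX : Integrable X μ)
    (h_int : Integrable (fun ω => exp (t * X ω)) μ) :
    cgf X μ t / t ≤ μ[X] := by
  have h_jensen : exp (t * μ[X]) ≤ mgf X μ t := by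
    rw [← integral_const_mul]
    exact convexOn_exp.map_integral_le continuous_exp.continuousOn isClosed_univ
      (ae_of_all _ fun _ => mem_univ _) (hX.const_mul t) h_int
  rw [div_le_iff_of_neg ht, mul_comm]
  exact (le_log_iff_exp_le (mgf_pos h_int)).2 h_jensen

/-- Lyapunov's inequality: `exp (s X) = exp (t X) ^ (s / t)` with `s / t ≥ 1`. -/
lemma cgf_div_le_cgf_div (hs : Integrable (fun ω => exp (s * X ω)) μ) (hst : s ≤ t)
    (ht : t < 0) :
    cgf X μ s / s ≤ cgf X μ t / t := by
  have ht_int := integrable_exp_mul_of_nonpos_of_ge hs ht.le hst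
  have hθ : 1 ≤ s / t := (one_le_div_of_neg ht).2 hst
  have h_pow : ∀ ω, exp (t * X ω) ^ (s / t) = exp (s * X ω) := fun ω => by
    rw [← exp_mul]; congr 1; field_simp [ht.ne]
  have h_jensen : mgf X μ t ^ (s / t) ≤ mgf X μ s := by
    have := (convexOn_rpow hθ).map_integral_le
      ((continuous_id.rpow_const fun _ => Or.inr (by linarith)).continuousOn) isClosed_Ici
      (ae_of_all _ fun ω => (exp_pos (t * X ω)).le) ht_int
      (by simpa [Function.comp_def, h_pow] using hs)
    simpa [h_pow, mgf] using this
  have h_log : s / t * cgf X μ t ≤ cgf X μ s := by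
    rw [cgf, cgf, ← log_rpow (mgf_pos ht_int)]
    exact log_le_log (rpow_pos_of_pos (mgf_pos ht_int) _) h_jensen
  rw [div_le_iff_of_neg (by linarith)]
  calc cgf X μ t / t * s = s / t * cgf X μ t := by ring
    _ ≤ cgf X μ s := h_log

lemma tendsto_mgf_sub_one_div_of_integrable {t₀ : ℝ} (ht₀ : t₀ < 0)
    (h₀ : Integrable (fun ω => exp (t₀ * X ω)) μ) (hX : Integrable X μ) :
    Tendsto (fun t => (mgf X μ t - 1) / t) (𝓝[<] 0) (𝓝 μ[X]) := by
  have h_mem : Ioo t₀ 0 ∈ 𝓝[<] (0 : ℝ) := Ioo_mem_nhdsLT ht₀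
  have h_eq : (fun t => ∫ ω, (exp (t * X ω) - 1) / t ∂μ) =ᶠ[𝓝[<] 0]
      fun t => (mgf X μ t - 1) / t := by
    filter_upwards [h_mem] with t ht
    exact (mgf_sub_one_div_eq_integral
      (integrable_exp_mul_of_nonpos_of_ge h₀ ht.2.le ht.1.le)).symm
  refine Tendsto.congr' h_eq (tendsto_integral_filter_of_dominated_convergence
    (fun ω => |(exp (t₀ * X ω) - 1) / t₀| + |X ω|) ?_ ?_ ?_ ?_)
  · filter_upwards [h_mem] with t ht
    exact ((integrable_exp_mul_of_nonpos_of_ge h₀ ht.2.le ht.1.le).sub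
      (integrable_const 1)).div_const t |>.aestronglyMeasurable
  · filter_upwards [h_mem] with t ht
    refine ae_of_all _ fun ω => abs_le.2 ⟨?_, ?_⟩
    · have := exp_mul_sub_one_div_le_exp_mul_sub_one_div ht.1.le ht.2 (X ω)
      linarith [neg_abs_le ((exp (t₀ * X ω) - 1) / t₀), abs_nonneg (X ω)]
    · have := exp_mul_sub_one_div_le_of_neg ht.2 (X ω)
      linarith [le_abs_self (X ω), abs_nonneg ((exp (t₀ * X ω) - 1) / t₀)]
  · exact ((h₀.sub (integrable_const 1)).div_const t₀).abs.add hX.abs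
  · exact ae_of_all _ fun ω => tendsto_exp_mul_sub_one_div (X ω)

lemma tendsto_mgf_sub_one_div_atTop_of_not_integrable {t₀ : ℝ} (ht₀ : t₀ < 0)
    (h₀ : Integrable (fun ω => exp (t₀ * X ω)) μ) (hX : ¬Integrable X μ) :
    Tendsto (fun t => (mgf X μ t - 1) / t) (𝓝[<] 0) atTop := by
  set u : ℕ → ℝ := fun n => t₀ / (n + 1)
  have hu_neg : ∀ n, u n < 0 := fun n => div_neg_of_neg_of_pos ht₀ (by positivity)
  have hu_ge : ∀ n, t₀ ≤ u n := fun n => by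
    rw [le_div_iff₀ (by positivity)]; nlinarith [(n.cast_nonneg : (0 : ℝ) ≤ n)]
  have hu_mono : Monotone u := fun m n hmn => by
    simp only [u]
    rw [div_le_div_iff₀ (by positivity) (by positivity)]
    nlinarith [(Nat.cast_le (α := ℝ)).2 hmn]
  have hu_int : ∀ n, Integrable (fun ω => exp (u n * X ω)) μ := fun n =>
    integrable_exp_mul_of_nonpos_of_ge h₀ (hu_neg n).le (hu_ge n)
  have hu_tendsto : Tendsto u atTop (𝓝[<] 0) := by
    refine tendsto_nhdsWithin_iff.2 ⟨?_, Eventually.of_forall hu_neg⟩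
    simpa [u, div_eq_mul_one_div t₀] using tendsto_one_div_add_atTop_nhds_zero_nat.const_mul t₀
  have h_seq : Tendsto (fun n => (mgf X μ (u n) - 1) / u n) atTop atTop := by
    simp_rw [mgf_sub_one_div_eq_integral (hu_int _)]
    refine tendsto_integral_atTop_of_monotone_of_not_integrable
      (fun n => ((hu_int n).sub (integrable_const 1)).div_const _)
      (aemeasurable_of_aemeasurable_exp_mul ht₀.ne h₀.aemeasurable).aestronglyMeasurable hX
      (ae_of_all _ fun ω m n hmn => exp_mul_sub_one_div_le_exp_mul_sub_one_div
        (hu_mono hmn) (hu_neg n) (X ω))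
      (ae_of_all _ fun ω => (tendsto_exp_mul_sub_one_div (X ω)).comp hu_tendsto)
  refine tendsto_atTop.2 fun M => ?_
  obtain ⟨n, hn⟩ := (tendsto_atTop.1 h_seq M).exists
  filter_upwards [Ioo_mem_nhdsLT (hu_neg n)] with t ht
  exact hn.trans (mgf_sub_one_div_le_mgf_sub_one_div (hu_int n) ht.1.le ht.2)

lemma tendsto_cgf_div_of_integrable {t₀ : ℝ} (ht₀ : t₀ < 0)
    (h₀ : Integrable (fun ω => exp (t₀ * X ω)) μ) (hX : Integrable X μ) :
    Tendsto (fun t => cgf X μ t / t) (𝓝[<] 0) (𝓝 μ[X]) := by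
  have h_int : ∀ᶠ t in 𝓝[<] (0 : ℝ), t < 0 ∧ Integrable (fun ω => exp (t * X ω)) μ := by
    filter_upwards [Ioo_mem_nhdsLT ht₀] with t ht
    exact ⟨ht.2, integrable_exp_mul_of_nonpos_of_ge h₀ ht.2.le ht.1.le⟩
  refine tendsto_of_tendsto_of_tendsto_of_le_of_le'
    (tendsto_mgf_sub_one_div_of_integrable ht₀ h₀ hX) tendsto_const_nhds ?_ ?_
  · exact h_int.mono fun t ht => mgf_sub_one_div_le_cgf_div ht.1 ht.2
  · exact h_int.mono fun t ht => cgf_div_le_integral ht.1 hX ht.2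

lemma tendsto_cgf_div_atTop_of_not_integrable {t₀ : ℝ} (ht₀ : t₀ < 0)
    (h₀ : Integrable (fun ω => exp (t₀ * X ω)) μ) (hX : ¬Integrable X μ) :
    Tendsto (fun t => cgf X μ t / t) (𝓝[<] 0) atTop := by
  refine tendsto_atTop_mono' _ ?_ (tendsto_mgf_sub_one_div_atTop_of_not_integrable ht₀ h₀ hX)
  filter_upwards [Ioo_mem_nhdsLT ht₀] with t ht
  exact mgf_sub_one_div_le_cgf_div ht.2 (integrable_exp_mul_of_nonpos_of_ge h₀ ht.2.le ht.1.le)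

end Cgf

section Renyi

variable {Ω : Type*} [MeasurableSpace Ω] {P R : Measure Ω}

lemma integral_rnDeriv_rpow_eq_mgf_llr [SigmaFinite P] [SigmaFinite R] (hPR : P ≪ R) (c : ℝ) :
    ∫ x, (P.rnDeriv R x).toReal ^ c ∂P = mgf (llr P R) P c := by
  refine integral_congr_ae ?_
  filter_upwards [exp_llr_of_ac P R hPR] with x hx
  rw [← hx, ← exp_mul, mul_comm]

lemma renyiDiv_eq_cgf_llr_div [SigmaFinite P] [SigmaFinite R] (hPR : P ≪ R) (a : ℝ) :
    renyiDiv a P R = ((cgf (llr P R) P (a - 1) / (a - 1) : ℝ) : EReal) := by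
  rw [renyiDiv, if_pos hPR, integral_rnDeriv_rpow_eq_mgf_llr hPR, inv_mul_eq_div, cgf]

lemma integrable_exp_neg_llr [SigmaFinite P] [IsFiniteMeasure R] (hPR : P ≪ R) :
    Integrable (fun x => exp (-1 * llr P R x)) P := by
  simpa only [neg_one_mul] using Measure.integrable_toReal_rnDeriv.congr (exp_neg_llr hPR).symm

end Renyi

/-- The Rényi divergence is nondecreasing in `α` on `(0,1)` and increases to the
Kullback–Leibler divergence as `α ↑ 1`. -/
theorem renyiDiv_monotone_tendsto_klDiv {X : Type*} [MeasurableSpace X]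
    (P R : Measure X) [IsProbabilityMeasure P] [IsProbabilityMeasure R] :
    MonotoneOn (fun a => renyiDiv a P R) (Set.Ioo (0 : ℝ) 1) ∧
      Filter.Tendsto (fun a => renyiDiv a P R) (nhdsWithin 1 (Set.Iio (1 : ℝ)))
        (nhds (klDiv' P R)) := by
  by_cases hPR : P ≪ R
  swap
  · simp only [renyiDiv, klDiv', hPR, false_and, if_false]
    exact ⟨monotoneOn_const, tendsto_const_nhds⟩
  simp_rw [renyiDiv_eq_cgf_llr_div hPR]
  have h_int := integrable_exp_neg_llr hPR
  have h_shift : Tendsto (fun a : ℝ => a - 1) (𝓝[<] 1) (𝓝[<] 0) := by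
    refine tendsto_nhdsWithin_iff.2
      ⟨?_, eventually_nhdsWithin_of_forall fun a (ha : a < 1) => sub_neg.2 ha⟩
    simpa using (tendsto_nhdsWithin_of_tendsto_nhds (tendsto_id (x := 𝓝 (1 : ℝ)))).sub_const 1
  refine ⟨fun a ha b hb hab => EReal.coe_le_coe_iff.2 (cgf_div_le_cgf_div
    (integrable_exp_mul_of_nonpos_of_ge h_int (by linarith [ha.2]) (by linarith [ha.1]))
    (by linarith) (by linarith [hb.2])), ?_⟩
  by_cases hllr : Integrable (llr P R) P
  · rw [klDiv', if_pos ⟨hPR, hllr⟩]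
    exact (continuous_coe_real_ereal.tendsto _).comp
      ((tendsto_cgf_div_of_integrable (by norm_num) h_int hllr).comp h_shift)
  · rw [klDiv', if_neg fun h => hllr h.2]
    exact EReal.tendsto_coe_atTop.comp
      ((tendsto_cgf_div_atTop_of_not_integrable (by norm_num) h_int hllr).comp h_shift)
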